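/- In a Leibniz algebra, the sum of two nilpotent ideals is a nilpotent ideal. -/
import Mathlib

/-- A (right) Leibniz algebra over a field `F`. -/
structure LeibnizAlgebra (F : Type*) [Field F] (L : Type*) [AddCommGroup L] [Module F L] where
  bracket : L →ₗ[F] L →ₗ[F] L
  leibniz : ∀ x y z : L,
    bracket x (bracket y z) = bracket (bracket x y) z - bracket (bracket x z) y

namespace LeibnizAlgebra

variable {F : Type*} [Field F] {L : Type*} [AddCommGroup L] [Module F L]

/-- The subspace spanned by all brackets `[a,b]` with `a ∈ I`, `b ∈ J`. -/
def bracketSub (A : LeibnizAlgebra F L) (I J : Submodule F L) : Submodule F L :=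
  Submodule.span F {z : L | ∃ a ∈ I, ∃ b ∈ J, z = A.bracket a b}

/-- A (two-sided) ideal of a Leibniz algebra. -/
def IsIdeal (A : LeibnizAlgebra F L) (I : Submodule F L) : Prop :=
  ∀ x a : L, a ∈ I → A.bracket x a ∈ I ∧ A.bracket a x ∈ I

/-- `lcsPow A I k` is `I^{k+1}`, where `I^1 = I` and `I^{k+1} = [I^k, I]`. -/
def lcsPow (A : LeibnizAlgebra F L) (I : Submodule F L) : ℕ → Submodule F L
  | 0 => I
  | k + 1 => A.bracketSub (A.lcsPow I k) I

/-- `derPow A I s` is `I^{[s+1]}`, where `I^{[1]} = I` and `I^{[s+1]} = [I^{[s]}, I^{[s]}]`. -/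
def derPow (A : LeibnizAlgebra F L) (I : Submodule F L) : ℕ → Submodule F L
  | 0 => I
  | s + 1 => A.bracketSub (A.derPow I s) (A.derPow I s)

end LeibnizAlgebra

namespace LeibnizAlgebra

variable {F : Type*} [Field F] {L : Type*} [AddCommGroup L] [Module F L]
  (A : LeibnizAlgebra F L)

lemma bracket_mem_bracketSub {I J : Submodule F L} {a b : L} (ha : a ∈ I) (hb : b ∈ J) :
    A.bracket a b ∈ A.bracketSub I J :=
  Submodule.subset_span ⟨a, ha, b, hb, rfl⟩

lemma bracketSub_le {I J K : Submodule F L}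
    (h : ∀ a ∈ I, ∀ b ∈ J, A.bracket a b ∈ K) : A.bracketSub I J ≤ K := by
  apply Submodule.span_le.2
  rintro z ⟨a, ha, b, hb, rfl⟩
  exact h a ha b hb

lemma forall_bracketSub {I J : Submodule F L} (f : L →ₗ[F] L) (K : Submodule F L)
    (h : ∀ a ∈ I, ∀ b ∈ J, f (A.bracket a b) ∈ K) :
    ∀ w ∈ A.bracketSub I J, f w ∈ K := by
  intro w hw
  have hle : A.bracketSub I J ≤ K.comap f := by
    apply Submodule.span_le.2
    rintro z ⟨a, ha, b, hb, rfl⟩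
    exact h a ha b hb
  exact hle hw

/-- `[I^(a+1), I^(b+1)] ⊆ I^(a+b+2)` (indices shifted: `lcsPow I k = I^(k+1)`). -/
lemma bracketSub_lcsPow_le (I : Submodule F L) :
    ∀ b a : ℕ, A.bracketSub (A.lcsPow I a) (A.lcsPow I b) ≤ A.lcsPow I (a + b + 1) := by
  intro b
  induction b with
  | zero => intro a; exact le_of_eq rfl
  | succ b ih =>
    intro a
    apply A.bracketSub_le
    intro x hx
    apply A.forall_bracketSub (A.bracket x)
    intro y hy z hz
    rw [A.leibniz x y z]
    apply sub_mem
    · have h1 : A.bracket x y ∈ A.lcsPow I (a + b + 1) :=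
        ih a (A.bracket_mem_bracketSub hx hy)
      exact A.bracket_mem_bracketSub h1 hz
    · have h2 : A.bracket x z ∈ A.lcsPow I (a + 1) :=
        A.bracket_mem_bracketSub hx hz
      have h3 := ih (a + 1) (A.bracket_mem_bracketSub h2 hy)
      have : a + 1 + b + 1 = a + (b + 1) + 1 := by omega
      rwa [this] at h3

lemma lcsPow_isIdeal {I : Submodule F L} (hI : A.IsIdeal I) :
    ∀ s : ℕ, A.IsIdeal (A.lcsPow I s) := by
  intro s
  induction s with
  | zero => exact hI
  | succ s ih =>
    intro x w hw
    constructor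
    · refine A.forall_bracketSub (A.bracket x) _ ?_ w hw
      intro u hu y hy
      rw [A.leibniz x u y]
      apply sub_mem
      · exact A.bracket_mem_bracketSub ((ih x u hu).1) hy
      · have h1 : A.bracket x y ∈ I := (hI x y hy).1
        have h2 := A.bracketSub_lcsPow_le I s 0 (A.bracket_mem_bracketSub h1 hu)
        simpa using h2
    · refine A.forall_bracketSub (A.bracket.flip x) _ ?_ w hw
      intro u hu y hy
      have heq : A.bracket (A.bracket u y) x
          = A.bracket u (A.bracket y x) + A.bracket (A.bracket u x) y := by
        rw [A.leibniz u y x]; abel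
      show A.bracket (A.bracket u y) x ∈ A.lcsPow I (s + 1)
      rw [heq]
      apply add_mem
      · exact A.bracket_mem_bracketSub hu ((hI x y hy).2)
      · exact A.bracket_mem_bracketSub ((ih x u hu).2) hy

lemma lcsPow_antitone {I : Submodule F L} (hI : A.IsIdeal I) :
    ∀ {m n : ℕ}, m ≤ n → A.lcsPow I n ≤ A.lcsPow I m := by
  have step : ∀ s : ℕ, A.lcsPow I (s + 1) ≤ A.lcsPow I s := by
    intro s
    apply A.bracketSub_le
    intro u hu y hy
    exact (A.lcsPow_isIdeal hI s y u hu).2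
  intro m n h
  induction h with
  | refl => exact le_rfl
  | step h ih => exact le_trans (step _) ih

/-- Shifted powers: `lcsPow' I 0 = ⊤`, `lcsPow' I (a+1) = I^(a+1)`. -/
def lcsPow' (I : Submodule F L) : ℕ → Submodule F L
  | 0 => ⊤
  | a + 1 => A.lcsPow I a

lemma lcsPow'_bracket_right {I : Submodule F L} (hI : A.IsIdeal I) :
    ∀ a : ℕ, ∀ x ∈ A.lcsPow' I a, ∀ i ∈ I, A.bracket x i ∈ A.lcsPow' I (a + 1) := by
  intro a x hx i hi
  match a with
  | 0 => exact (hI x i hi).1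
  | a + 1 => exact A.bracket_mem_bracketSub hx hi

lemma lcsPow'_stable {I : Submodule F L} (hI : A.IsIdeal I) :
    ∀ a : ℕ, ∀ x ∈ A.lcsPow' I a, ∀ y : L, A.bracket x y ∈ A.lcsPow' I a := by
  intro a x hx y
  match a with
  | 0 => trivial
  | a + 1 => exact (A.lcsPow_isIdeal hI a y x hx).2

end LeibnizAlgebra

open LeibnizAlgebra in
/-- In a Leibniz algebra, the sum of two nilpotent ideals is a nilpotent ideal. -/
theorem sup_of_nilpotent_ideals_isNilpotent
    {F : Type*} [Field F] {L : Type*} [AddCommGroup L] [Module F L]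
    (A : LeibnizAlgebra F L) (I J : Submodule F L)
    (hI : A.IsIdeal I) (hJ : A.IsIdeal J)
    (hInil : ∃ m : ℕ, A.lcsPow I m = ⊥) (hJnil : ∃ m : ℕ, A.lcsPow J m = ⊥) :
    A.IsIdeal (I ⊔ J) ∧ ∃ m : ℕ, A.lcsPow (I ⊔ J) m = ⊥ := by
  have hK : A.IsIdeal (I ⊔ J) := by
    intro x a ha
    obtain ⟨i, hi, j, hj, rfl⟩ := Submodule.mem_sup.1 ha
    constructor
    · rw [map_add]
      exact add_mem (Submodule.mem_sup_left (hI x i hi).1)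
        (Submodule.mem_sup_right (hJ x j hj).1)
    · have : A.bracket (i + j) x = A.bracket i x + A.bracket j x := by
        simp [map_add]
      rw [this]
      exact add_mem (Submodule.mem_sup_left (hI x i hi).2)
        (Submodule.mem_sup_right (hJ x j hj).2)
  refine ⟨hK, ?_⟩
  obtain ⟨mI, hmI⟩ := hInil
  obtain ⟨mJ, hmJ⟩ := hJnil
  -- The target family
  set T : ℕ → Submodule F L := fun n =>
    ⨆ (p : ℕ × ℕ) (_ : p.1 + p.2 = n + 1), (A.lcsPow' I p.1 ⊓ A.lcsPow' J p.2) with hT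
  have hQle : ∀ {n : ℕ} (a b : ℕ), a + b = n + 1 →
      A.lcsPow' I a ⊓ A.lcsPow' J b ≤ T n := by
    intro n a b hab
    exact le_iSup_of_le (a, b) (le_iSup_of_le hab le_rfl)
  -- main inclusion
  have main : ∀ n : ℕ, A.lcsPow (I ⊔ J) n ≤ T n := by
    intro n
    induction n with
    | zero =>
      apply sup_le
      · exact le_trans (le_inf (le_of_eq rfl) le_top) (hQle 1 0 rfl)
      · exact le_trans (le_inf le_top (le_of_eq rfl)) (hQle 0 1 rfl)
    | succ n ih =>
      show A.bracketSub (A.lcsPow (I ⊔ J) n) (I ⊔ J) ≤ T (n + 1)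
      apply A.bracketSub_le
      intro x hx y hy
      have hx' : x ∈ T n := ih hx
      obtain ⟨i, hi, j, hj, rfl⟩ := Submodule.mem_sup.1 hy
      rw [map_add]
      have key : ∀ (z : L), (z ∈ I → ∀ c ∈ I, True) → True := fun _ _ => trivial
      have stepI : ∀ x ∈ T n, A.bracket x i ∈ T (n + 1) := by
        intro x hx
        have hle : T n ≤ (T (n + 1)).comap (A.bracket.flip i) := by
          apply iSup_le; rintro ⟨a, b⟩
          apply iSup_le; intro hab
          rintro z ⟨hz1, hz2⟩
          show A.bracket z i ∈ T (n + 1)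
          refine hQle (a + 1) b (by omega) ⟨?_, ?_⟩
          · exact A.lcsPow'_bracket_right hI a z hz1 i hi
          · exact A.lcsPow'_stable hJ b z hz2 i
        exact hle hx
      have stepJ : ∀ x ∈ T n, A.bracket x j ∈ T (n + 1) := by
        intro x hx
        have hle : T n ≤ (T (n + 1)).comap (A.bracket.flip j) := by
          apply iSup_le; rintro ⟨a, b⟩
          apply iSup_le; intro hab
          rintro z ⟨hz1, hz2⟩
          show A.bracket z j ∈ T (n + 1)
          refine hQle a (b + 1) (by omega) ⟨?_, ?_⟩
          · exact A.lcsPow'_stable hI a z hz1 j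
          · exact A.lcsPow'_bracket_right hJ b z hz2 j hj
        exact hle hx
      exact add_mem (stepI x hx') (stepJ x hx')
  refine ⟨mI + mJ + 1, le_bot_iff.1 ?_⟩
  refine le_trans (main (mI + mJ + 1)) ?_
  apply iSup_le; rintro ⟨a, b⟩
  apply iSup_le; intro hab
  rcases (by omega : mI + 1 ≤ a ∨ mJ + 1 ≤ b) with h | h
  · refine le_trans inf_le_left ?_
    obtain ⟨a', rfl⟩ : ∃ a', a = a' + 1 := ⟨a - 1, by omega⟩
    show A.lcsPow I a' ≤ ⊥
    rw [← hmI]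
    exact A.lcsPow_antitone hI (by omega)
  · refine le_trans inf_le_right ?_
    obtain ⟨b', rfl⟩ : ∃ b', b = b' + 1 := ⟨b - 1, by omega⟩
    show A.lcsPow J b' ≤ ⊥
    rw [← hmJ]
    exact A.lcsPow_antitone hJ (by omega)
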